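/- In the setting of the kernel F_ℓ, let s₀ ∈ [a,1) be a zero of v(s) = F_ℓ(s₀,s₀), i.e., C(√(1−s₀)) = 0, and set (β₁, β₂) = ∇F_ℓ(s₀, s₀). Then β₁ + β₂ = v′(s₀) = −(U_n(√s₀)/√(1−s₀)) C′(√(1−s₀)) and β₁ = (1/√(1−s₀)) C′(√(1−s₀)) ((n−3) U_n(√s₀) − 2√s₀ U_n′(√s₀)); consequently 1 + β₁/(2(β₁+β₂)) = (n+1)/2 + √s₀ U′(√s₀)/U(√s₀). -/

import Mathlib

open Real Set Filter Topology

/-- Gegenbauer polynomials `C_ℓ^μ` normalized so that `C_ℓ^μ(1) = 1`. -/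
noncomputable def normGegenbauer (μ : ℝ) : ℕ → ℝ → ℝ
  | 0, _ => 1
  | 1, x => x
  | (ℓ + 2), x =>
      (2 * ((ℓ : ℝ) + 1 + μ) * x * normGegenbauer μ (ℓ + 1) x
        - ((ℓ : ℝ) + 1) * normGegenbauer μ ℓ x) / (2 * μ + (ℓ : ℝ) + 1)

/-- `U_n(r) = U(r) r^{n-2}`. -/
noncomputable def Uweight (n : ℕ) (U : ℝ → ℝ) (r : ℝ) : ℝ := U r * r ^ (n - 2)

/-- The kernel `F_ℓ(t,s) = Σ_{σ=±1} σ^ℓ U_n(√t - σ√(t-s)) C((√t√(t-s) + σ(1-t))/√(1-s))`. -/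
noncomputable def Fker (n : ℕ) (ℓ : ℕ) (U : ℝ → ℝ) (t s : ℝ) : ℝ :=
  Uweight n U (Real.sqrt t - Real.sqrt (t - s)) *
      normGegenbauer (((n : ℝ) - 2) / 2) ℓ
        ((Real.sqrt t * Real.sqrt (t - s) + (1 - t)) / Real.sqrt (1 - s)) +
    (-1) ^ ℓ * Uweight n U (Real.sqrt t + Real.sqrt (t - s)) *
      normGegenbauer (((n : ℝ) - 2) / 2) ℓ
        ((Real.sqrt t * Real.sqrt (t - s) - (1 - t)) / Real.sqrt (1 - s))

/-- The closed triangle `{(t,s) : a ≤ s ≤ t ≤ b}`. -/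
def triangleDom (a b : ℝ) : Set (ℝ × ℝ) := {p | a ≤ p.2 ∧ p.2 ≤ p.1 ∧ p.1 ≤ b}

namespace NG
variable (μ : ℝ)

local notation "c" => normGegenbauer μ

lemma rec_eq (ℓ : ℕ) (x : ℝ) : c (ℓ+2) x =
    (2 * ((ℓ : ℝ) + 1 + μ) * x * c (ℓ + 1) x - ((ℓ : ℝ) + 1) * c ℓ x) / (2 * μ + (ℓ : ℝ) + 1) :=
  rfl

lemma diff_pair : ∀ ℓ : ℕ, (Differentiable ℝ (c ℓ) ∧ Differentiable ℝ (deriv (c ℓ)))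
    ∧ (Differentiable ℝ (c (ℓ+1)) ∧ Differentiable ℝ (deriv (c (ℓ+1)))) := by
  have h0 : Differentiable ℝ (c 0) ∧ Differentiable ℝ (deriv (c 0)) := by
    constructor
    · exact differentiable_const 1
    · have : deriv (c 0) = fun _ => (0:ℝ) := by
        funext x; exact deriv_const x 1
      rw [this]; exact differentiable_const 0
  have h1 : Differentiable ℝ (c 1) ∧ Differentiable ℝ (deriv (c 1)) := by
    constructor
    · exact differentiable_id
    · have : deriv (c 1) = fun _ => (1:ℝ) := by
        funext x; exact deriv_id x
      rw [this]; exact differentiable_const 1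
  intro ℓ
  induction ℓ with
  | zero => exact ⟨h0, h1⟩
  | succ m ih =>
    refine ⟨ih.2, ?_, ?_⟩
    · intro x
      have : c (m+2) = fun x => (2 * ((m : ℝ) + 1 + μ) * x * c (m + 1) x
          - ((m : ℝ) + 1) * c m x) / (2 * μ + (m : ℝ) + 1) := rfl
      rw [this]
      exact (((differentiable_const _).mul differentiable_id).mul ih.2.1 |>.sub
        ((differentiable_const _).mul ih.1.1)).div_const _ x
    · have hde : deriv (c (m+2)) = fun x => (2 * ((m : ℝ) + 1 + μ) * (c (m+1) x + x * deriv (c (m+1)) x)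
          - ((m : ℝ) + 1) * deriv (c m) x) / (2 * μ + (m : ℝ) + 1) := by
        funext x
        have h1 : HasDerivAt (fun x => 2 * ((m : ℝ) + 1 + μ) * x * c (m + 1) x)
            (2 * ((m : ℝ) + 1 + μ) * (c (m+1) x + x * deriv (c (m+1)) x)) x := by
          have := (((hasDerivAt_id x).const_mul (2 * ((m : ℝ) + 1 + μ))).mul
            ((ih.2.1 x).hasDerivAt))
          refine this.congr_deriv ?_
          simp only [id_eq, mul_one]; ring
        have h2 : HasDerivAt (fun x => ((m : ℝ) + 1) * c m x) (((m : ℝ) + 1) * deriv (c m) x) x :=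
          ((ih.1.1 x).hasDerivAt).const_mul _
        have h3 := ((h1.sub h2).div_const (2 * μ + (m : ℝ) + 1))
        have : (fun x => c (m+2) x) = fun x => (2 * ((m : ℝ) + 1 + μ) * x * c (m + 1) x
            - ((m : ℝ) + 1) * c m x) / (2 * μ + (m : ℝ) + 1) := rfl
        rw [show c (m+2) = fun x => (2 * ((m : ℝ) + 1 + μ) * x * c (m + 1) x
            - ((m : ℝ) + 1) * c m x) / (2 * μ + (m : ℝ) + 1) from rfl]
        exact h3.deriv
      rw [hde]
      exact ((((differentiable_const _).mul (ih.2.1.add (differentiable_id.mul ih.2.2))).sub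
        ((differentiable_const _).mul ih.1.2)).div_const _)

lemma diff (ℓ : ℕ) : Differentiable ℝ (c ℓ) := (diff_pair μ ℓ).1.1
lemma diff_deriv (ℓ : ℕ) : Differentiable ℝ (deriv (c ℓ)) := (diff_pair μ ℓ).1.2

lemma deriv_rec (ℓ : ℕ) : deriv (c (ℓ+2)) = fun x =>
    (2 * ((ℓ : ℝ) + 1 + μ) * (c (ℓ+1) x + x * deriv (c (ℓ+1)) x)
      - ((ℓ : ℝ) + 1) * deriv (c ℓ) x) / (2 * μ + (ℓ : ℝ) + 1) := by
  funext x
  have h1 : HasDerivAt (fun x => 2 * ((ℓ : ℝ) + 1 + μ) * x * c (ℓ + 1) x)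
      (2 * ((ℓ : ℝ) + 1 + μ) * (c (ℓ+1) x + x * deriv (c (ℓ+1)) x)) x := by
    have := (((hasDerivAt_id x).const_mul (2 * ((ℓ : ℝ) + 1 + μ))).mul
      ((diff μ (ℓ+1) x).hasDerivAt))
    refine this.congr_deriv ?_
    simp only [id_eq, mul_one]; ring
  have h2 : HasDerivAt (fun x => ((ℓ : ℝ) + 1) * c ℓ x) (((ℓ : ℝ) + 1) * deriv (c ℓ) x) x :=
    ((diff μ ℓ x).hasDerivAt).const_mul _
  have h3 := ((h1.sub h2).div_const (2 * μ + (ℓ : ℝ) + 1))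
  rw [show c (ℓ+2) = fun x => (2 * ((ℓ : ℝ) + 1 + μ) * x * c (ℓ + 1) x
      - ((ℓ : ℝ) + 1) * c ℓ x) / (2 * μ + (ℓ : ℝ) + 1) from rfl]
  exact h3.deriv

lemma parity : ∀ ℓ : ℕ, ∀ x : ℝ, c ℓ (-x) = (-1)^ℓ * c ℓ x := by
  have key : ∀ ℓ : ℕ, (∀ x : ℝ, c ℓ (-x) = (-1)^ℓ * c ℓ x)
      ∧ (∀ x : ℝ, c (ℓ+1) (-x) = (-1)^(ℓ+1) * c (ℓ+1) x) := by
    intro ℓ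
    induction ℓ with
    | zero =>
      refine ⟨fun x => by simp [normGegenbauer], fun x => by simp [normGegenbauer]⟩
    | succ m ih =>
      refine ⟨ih.2, fun x => ?_⟩
      rw [rec_eq, rec_eq, ih.1 x, ih.2 x]
      ring
  exact fun ℓ => (key ℓ).1

lemma rec_mul (hμ : 0 ≤ μ) (ℓ : ℕ) (x : ℝ) :
    (2 * μ + (ℓ : ℝ) + 1) * c (ℓ+2) x =
      2 * ((ℓ : ℝ) + 1 + μ) * x * c (ℓ + 1) x - ((ℓ : ℝ) + 1) * c ℓ x := by
  have hpos : (0:ℝ) < 2 * μ + (ℓ : ℝ) + 1 := by positivity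
  rw [rec_eq]
  field_simp

lemma deriv_rec_mul (hμ : 0 ≤ μ) (ℓ : ℕ) (x : ℝ) :
    (2 * μ + (ℓ : ℝ) + 1) * deriv (c (ℓ+2)) x =
      2 * ((ℓ : ℝ) + 1 + μ) * (c (ℓ+1) x + x * deriv (c (ℓ+1)) x)
        - ((ℓ : ℝ) + 1) * deriv (c ℓ) x := by
  have hpos : (0:ℝ) < 2 * μ + (ℓ : ℝ) + 1 := by positivity
  rw [deriv_rec]
  field_simp

lemma c0x (x : ℝ) : c 0 x = 1 := rfl
lemma c1x (x : ℝ) : c 1 x = x := rfl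
lemma d1x : deriv (c 1) = fun _ => (1:ℝ) := by
  funext x; exact deriv_id x
lemma d0x : deriv (c 0) = fun _ => (0:ℝ) := by
  funext x; exact deriv_const x 1

lemma D1 (hμ : 0 ≤ μ) : ∀ ℓ : ℕ, ∀ x : ℝ,
    (1 - x^2) * deriv (c (ℓ+1)) x = ((ℓ : ℝ)+1) * (c ℓ x - x * c (ℓ+1) x) := by
  have key : ∀ ℓ : ℕ, (∀ x : ℝ, (1 - x^2) * deriv (c (ℓ+1)) x
        = ((ℓ : ℝ)+1) * (c ℓ x - x * c (ℓ+1) x))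
      ∧ (∀ x : ℝ, (1 - x^2) * deriv (c (ℓ+2)) x
        = ((ℓ : ℝ)+2) * (c (ℓ+1) x - x * c (ℓ+2) x)) := by
    intro ℓ
    induction ℓ with
    | zero =>
      constructor
      · intro x
        simp only [show (0:ℕ)+1 = 1 from rfl, d1x, c0x, c1x]
        push_cast; ring
      · intro x
        have hr := rec_mul μ hμ 0 x
        have hd := deriv_rec_mul μ hμ 0 x
        simp only [show (0:ℕ)+1 = 1 from rfl, show (0:ℕ)+2 = 2 from rfl, Nat.cast_zero,
          d1x, d0x, c0x, c1x] at hr hd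
        have hpos : (0:ℝ) < 2 * μ + (0:ℝ) + 1 := by positivity
        have goal_mul : (2 * μ + (0:ℝ) + 1) * ((1 - x^2) * deriv (c 2) x)
            = (2 * μ + (0:ℝ) + 1) * (((0:ℝ)+2) * (c 1 x - x * c 2 x)) := by
          simp only [c1x] at hr hd ⊢
          linear_combination (1-x^2) * hd + 2*x*hr
        have := mul_left_cancel₀ (ne_of_gt hpos) goal_mul
        push_cast at this ⊢
        linear_combination this
    | succ m ih =>
      constructor
      · intro x
        show (1 - x^2) * deriv (c (m+2)) x = ((↑(m+1):ℝ)+1) * (c (m+1) x - x * c (m+2) x)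
        push_cast
        linear_combination ih.2 x
      · intro x
        show (1 - x^2) * deriv (c (m+3)) x = ((↑(m+1):ℝ)+2) * (c (m+2) x - x * c (m+3) x)
        have hr := rec_mul μ hμ (m+1) x
        have hd := deriv_rec_mul μ hμ (m+1) x
        have hr0 := rec_mul μ hμ m x
        have i1 := ih.1 x
        have i2 := ih.2 x
        simp only [show m+1+1 = m+2 from rfl, show m+1+2 = m+3 from rfl] at hr hd
        have hpos : (0:ℝ) < 2 * μ + ((m:ℝ)+1) + 1 := by positivity
        have goal_mul : (2 * μ + ((m:ℝ)+1) + 1) * ((1 - x^2) * deriv (c (m+3)) x)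
            = (2 * μ + ((m:ℝ)+1) + 1) * (((↑(m+1):ℝ)+2) * (c (m+2) x - x * c (m+3) x)) := by
          push_cast at hr hd hr0 i1 i2 ⊢
          linear_combination (1-x^2) * hd + (2*(μ+(m:ℝ)+2)*x) * i2 - ((m:ℝ)+2) * i1
            + (((m:ℝ)+3)*x) * hr - ((m:ℝ)+2) * hr0
        have := mul_left_cancel₀ (ne_of_gt hpos) goal_mul
        push_cast at this ⊢
        linear_combination this
  exact fun ℓ => (key ℓ).1

lemma D2 (hμ : 0 ≤ μ) : ∀ ℓ : ℕ, ∀ x : ℝ,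
    (1 - x^2) * deriv (c ℓ) x = ((ℓ : ℝ)+2*μ) * (x * c ℓ x - c (ℓ+1) x) := by
  intro ℓ
  cases ℓ with
  | zero =>
    intro x
    simp only [show (0:ℕ)+1 = 1 from rfl, d0x, c0x, c1x]
    push_cast; ring
  | succ m =>
    intro x
    have h1 := D1 μ hμ m x
    have hr := rec_mul μ hμ m x
    show (1 - x^2) * deriv (c (m+1)) x = ((↑(m+1):ℝ)+2*μ) * (x * c (m+1) x - c (m+2) x)
    push_cast
    linear_combination h1 + hr

lemma not_both_zero (hμ : 0 ≤ μ) : ∀ ℓ : ℕ, ∀ x : ℝ, c ℓ x = 0 → c (ℓ+1) x = 0 → False := by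
  intro ℓ
  induction ℓ with
  | zero => intro x h _; rw [c0x] at h; exact one_ne_zero h
  | succ m ih =>
    intro x h1 h2
    have hr := rec_mul μ hμ m x
    rw [show m+2 = m+1+1 from rfl] at hr
    rw [h1, h2] at hr
    have h3 : ((m:ℝ)+1) * c m x = 0 := by linear_combination hr
    have hm : ((m:ℝ)+1) ≠ 0 := by positivity
    exact ih x ((mul_eq_zero.mp h3).resolve_left hm) h1

lemma simple_zero (hμ : 0 ≤ μ) (ℓ : ℕ) (x : ℝ) (hz : c (ℓ+1) x = 0)
    (hd : deriv (c (ℓ+1)) x = 0) : False := by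
  have h1 := D1 μ hμ ℓ x
  rw [hz, hd] at h1
  have h3 : ((ℓ:ℝ)+1) * c ℓ x = 0 := by linear_combination -h1
  have hm : ((ℓ:ℝ)+1) ≠ 0 := by positivity
  exact not_both_zero μ hμ ℓ x ((mul_eq_zero.mp h3).resolve_left hm) hz

lemma ode_at_zero (hμ : 0 ≤ μ) (ℓ : ℕ) (x : ℝ) (hx : (1:ℝ) - x^2 ≠ 0)
    (h0 : c (ℓ+1) x = 0) :
    (1 - x^2) * deriv (deriv (c (ℓ+1))) x = (2*μ+1) * x * deriv (c (ℓ+1)) x := by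
  have hfun : (fun y => (1 - y^2) * deriv (c (ℓ+1)) y)
      = fun y => ((ℓ : ℝ)+1) * (c ℓ y - y * c (ℓ+1) y) := funext (D1 μ hμ ℓ)
  have hL : HasDerivAt (fun y => (1 - y^2) * deriv (c (ℓ+1)) y)
      ((-(2*x)) * deriv (c (ℓ+1)) x + (1 - x^2) * deriv (deriv (c (ℓ+1))) x) x := by
    have hpow : HasDerivAt (fun y : ℝ => 1 - y^2) (-(2*x)) x := by
      have := ((hasDerivAt_pow 2 x).const_sub 1)
      simpa using this
    exact hpow.mul (diff_deriv μ (ℓ+1) x).hasDerivAt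
  have hR : HasDerivAt (fun y => ((ℓ : ℝ)+1) * (c ℓ y - y * c (ℓ+1) y))
      (((ℓ : ℝ)+1) * (deriv (c ℓ) x - (c (ℓ+1) x + x * deriv (c (ℓ+1)) x))) x := by
    have h1 : HasDerivAt (fun y => y * c (ℓ+1) y) (c (ℓ+1) x + x * deriv (c (ℓ+1)) x) x := by
      have := (hasDerivAt_id x).mul (diff μ (ℓ+1) x).hasDerivAt
      refine this.congr_deriv ?_
      simp only [id_eq, one_mul]
    exact (((diff μ ℓ x).hasDerivAt.sub h1)).const_mul _
  rw [hfun] at hL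
  have E := hL.unique hR
  have hD1 := D1 μ hμ ℓ x
  have hD2 := D2 μ hμ ℓ x
  have goal_mul : (1 - x^2) * ((1 - x^2) * deriv (deriv (c (ℓ+1))) x)
      = (1 - x^2) * ((2*μ+1) * x * deriv (c (ℓ+1)) x) := by
    linear_combination (1-x^2) * E + ((ℓ:ℝ)+1) * hD2 - (((ℓ:ℝ)+2*μ)*x) * hD1
      - (((ℓ:ℝ)+1)*(1-x^2)*((ℓ:ℝ)+2*μ+1)) * h0
  exact mul_left_cancel₀ hx goal_mul

lemma neg_deriv {g : ℝ → ℝ} (hg : Differentiable ℝ g) (ε : ℝ)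
    (h : ∀ x, g (-x) = ε * g x) (x : ℝ) : deriv g (-x) = -ε * deriv g x := by
  have h1 : HasDerivAt (fun y => g (-y)) (deriv g (-x) * (-1)) x :=
    HasDerivAt.comp x (hg (-x)).hasDerivAt (hasDerivAt_neg x)
  have h2 : HasDerivAt (fun y => ε * g y) (ε * deriv g x) x := ((hg x).hasDerivAt).const_mul ε
  rw [show (fun y => g (-y)) = fun y => ε * g y from funext h] at h1
  have := h1.unique h2
  linarith

lemma deriv_parity (ℓ : ℕ) (x : ℝ) :
    deriv (c ℓ) (-x) = (-1)^(ℓ+1) * deriv (c ℓ) x := by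
  have := neg_deriv (diff μ ℓ) ((-1)^ℓ) (fun y => parity μ ℓ y) x
  rw [this]; ring

lemma deriv2_parity (ℓ : ℕ) (x : ℝ) :
    deriv (deriv (c ℓ)) (-x) = (-1)^ℓ * deriv (deriv (c ℓ)) x := by
  have := neg_deriv (diff_deriv μ ℓ) ((-1)^(ℓ+1)) (fun y => deriv_parity μ ℓ y) x
  rw [this]; ring
end NG

section Phi
variable (s₀ : ℝ) (u C : ℝ → ℝ) (ℓ : ℕ)

set_option maxHeartbeats 1000000 in
/-- The odd/even expansion limit: `(φ w - φ 0)/w² → β` as `w → 0⁺`. -/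
lemma phi_limit (hs0 : 0 < s₀) (hs1 : s₀ < 1)
    (hu : ∀ r : ℝ, 0 < r → AnalyticAt ℝ u r)
    (hud : ∀ r : ℝ, 0 < r → AnalyticAt ℝ (deriv u) r)
    (hC : Differentiable ℝ C) (hCd : Differentiable ℝ (deriv C))
    (hCpar : ∀ x, C (-x) = (-1)^ℓ * C x)
    (hCdpar : ∀ x, deriv C (-x) = (-1)^(ℓ+1) * deriv C x)
    (hCddpar : ∀ x, deriv (deriv C) (-x) = (-1)^ℓ * deriv (deriv C) x)
    (hzero : C (Real.sqrt (1 - s₀)) = 0) :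
    Tendsto (fun w => (u (Real.sqrt (s₀ + w^2) - w) *
        C ((Real.sqrt (s₀ + w^2) * w + (1 - s₀ - w^2)) / Real.sqrt (1 - s₀)) +
      (-1)^ℓ * (u (Real.sqrt (s₀ + w^2) + w) *
        C ((Real.sqrt (s₀ + w^2) * w - (1 - s₀ - w^2)) / Real.sqrt (1 - s₀)))) / w^2)
      (𝓝[>] (0:ℝ))
      (𝓝 (-2 * (Real.sqrt s₀ * deriv u (Real.sqrt s₀) + u (Real.sqrt s₀)) *
            deriv C (Real.sqrt (1 - s₀)) / Real.sqrt (1 - s₀)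
          + u (Real.sqrt s₀) * deriv (deriv C) (Real.sqrt (1 - s₀)) * s₀ / (1 - s₀))) := by
  set r₀ := Real.sqrt s₀ with hr₀
  set x₀ := Real.sqrt (1 - s₀) with hx₀
  have hr₀pos : 0 < r₀ := Real.sqrt_pos.mpr hs0
  have hx₀pos : 0 < x₀ := Real.sqrt_pos.mpr (by linarith)
  have hr₀sq : r₀^2 = s₀ := Real.sq_sqrt hs0.le
  have hx₀sq : x₀^2 = 1 - s₀ := Real.sq_sqrt (by linarith)
  set ρ : ℝ → ℝ := fun w => Real.sqrt (s₀ + w^2) with hρdef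
  have hρpos : ∀ w, 0 < ρ w := fun w => Real.sqrt_pos.mpr (by positivity)
  have hρsq : ∀ w, ρ w ^ 2 = s₀ + w^2 := fun w => Real.sq_sqrt (by positivity)
  have hρ : ∀ w, HasDerivAt ρ (w / ρ w) w := by
    intro w
    have h1 : HasDerivAt (fun w : ℝ => s₀ + w^2) (2*w) w := by
      simpa using ((hasDerivAt_pow 2 w).const_add s₀)
    have h2 := (Real.hasDerivAt_sqrt (by positivity : s₀ + w^2 ≠ 0)).comp w h1
    refine h2.congr_deriv ?_
    rw [hρdef]
    field_simp [(hρpos w).ne']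
  have hρ0 : ρ 0 = r₀ := by simp [hρdef, hr₀]
  have hρgt : ∀ w : ℝ, |w| < ρ w := by
    intro w
    have : Real.sqrt (w^2) < ρ w := by
      apply Real.sqrt_lt_sqrt (by positivity)
      linarith
    rwa [Real.sqrt_sq_eq_abs] at this
  -- the inner functions
  set p : ℝ → ℝ := fun w => ρ w - w with hpdef
  set P : ℝ → ℝ := fun w => ρ w + w with hPdef
  set q : ℝ → ℝ := fun w => (ρ w * w + (1 - s₀ - w^2)) / x₀ with hqdef
  set Q : ℝ → ℝ := fun w => (ρ w * w - (1 - s₀ - w^2)) / x₀ with hQdef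
  have hppos : ∀ w, 0 < p w := fun w => by
    have := hρgt w; have := neg_abs_le w; have := le_abs_self w
    simp only [hpdef]; linarith
  have hPpos : ∀ w, 0 < P w := fun w => by
    have := hρgt w; have := neg_abs_le w; have := le_abs_self w
    simp only [hPdef]; linarith
  set pd : ℝ → ℝ := fun w => w / ρ w - 1 with hpd_def
  set Pd : ℝ → ℝ := fun w => w / ρ w + 1 with hPd_def
  set qd : ℝ → ℝ := fun w => ((w / ρ w) * w + ρ w - 2*w) / x₀ with hqd_def
  set Qd : ℝ → ℝ := fun w => ((w / ρ w) * w + ρ w + 2*w) / x₀ with hQd_def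
  have hp : ∀ w, HasDerivAt p (pd w) w := fun w => (hρ w).sub (hasDerivAt_id w)
  have hP : ∀ w, HasDerivAt P (Pd w) w := fun w => (hρ w).add (hasDerivAt_id w)
  have hq : ∀ w, HasDerivAt q (qd w) w := by
    intro w
    have h1 : HasDerivAt (fun w => ρ w * w) ((w / ρ w) * w + ρ w) w := by
      have := (hρ w).mul (hasDerivAt_id w)
      simp at this ⊢; exact this
    have h2 : HasDerivAt (fun w : ℝ => 1 - s₀ - w^2) (-(2*w)) w := by
      simpa using ((hasDerivAt_pow 2 w).const_sub (1 - s₀))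
    have h3 := (h1.add h2).div_const x₀
    have h4 : ((w / ρ w) * w + ρ w + -(2*w)) / x₀ = qd w := by rw [hqd_def]; ring
    rwa [h4] at h3
  have hQ : ∀ w, HasDerivAt Q (Qd w) w := by
    intro w
    have h1 : HasDerivAt (fun w => ρ w * w) ((w / ρ w) * w + ρ w) w := by
      have := (hρ w).mul (hasDerivAt_id w)
      simp at this ⊢; exact this
    have h2 : HasDerivAt (fun w : ℝ => 1 - s₀ - w^2) (-(2*w)) w := by
      simpa using ((hasDerivAt_pow 2 w).const_sub (1 - s₀))
    have h3 := (h1.sub h2).div_const x₀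
    have h4 : ((w / ρ w) * w + ρ w - -(2*w)) / x₀ = Qd w := by rw [hQd_def]; ring
    rwa [h4] at h3
  -- φ and its derivative
  set φ : ℝ → ℝ := fun w => u (p w) * C (q w) + (-1)^ℓ * (u (P w) * C (Q w)) with hφdef
  set φd : ℝ → ℝ := fun w =>
      (deriv u (p w) * pd w * C (q w) + u (p w) * (deriv C (q w) * qd w))
      + (-1)^ℓ * (deriv u (P w) * Pd w * C (Q w) + u (P w) * (deriv C (Q w) * Qd w)) with hφd_def
  have hφ : ∀ w, HasDerivAt φ (φd w) w := by
    intro w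
    have hu1 : HasDerivAt (fun w => u (p w)) (deriv u (p w) * pd w) w :=
      ((hu _ (hppos w)).differentiableAt.hasDerivAt).comp w (hp w)
    have hu2 : HasDerivAt (fun w => u (P w)) (deriv u (P w) * Pd w) w :=
      ((hu _ (hPpos w)).differentiableAt.hasDerivAt).comp w (hP w)
    have hC1 : HasDerivAt (fun w => C (q w)) (deriv C (q w) * qd w) w :=
      ((hC _).hasDerivAt).comp w (hq w)
    have hC2 : HasDerivAt (fun w => C (Q w)) (deriv C (Q w) * Qd w) w :=
      ((hC _).hasDerivAt).comp w (hQ w)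
    exact (hu1.mul hC1).add ((hu2.mul hC2).const_mul _)
  -- values at 0
  have hp0 : p 0 = r₀ := by simp [hpdef, hρ0]
  have hP0 : P 0 = r₀ := by simp [hPdef, hρ0]
  have hq0 : q 0 = x₀ := by
    show (ρ 0 * 0 + (1 - s₀ - 0^2)) / x₀ = x₀
    rw [div_eq_iff hx₀pos.ne']
    linear_combination -hx₀sq
  have hQ0 : Q 0 = -x₀ := by
    show (ρ 0 * 0 - (1 - s₀ - 0^2)) / x₀ = -x₀
    rw [div_eq_iff hx₀pos.ne']
    linear_combination hx₀sq
  have hCq0 : C (q 0) = 0 := by rw [hq0]; exact hzero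
  have hCQ0 : C (Q 0) = 0 := by rw [hQ0, hCpar, hzero, mul_zero]
  have hpd0 : pd 0 = -1 := by simp [hpd_def]
  have hPd0 : Pd 0 = 1 := by simp [hPd_def]
  have hqd0 : qd 0 = r₀ / x₀ := by simp [hqd_def, hρ0]
  have hQd0 : Qd 0 = r₀ / x₀ := by simp [hQd_def, hρ0]
  have hsgn : ((-1:ℝ))^(ℓ+1) = -((-1:ℝ)^ℓ) := by rw [pow_succ]; ring
  have hsq : ((-1:ℝ))^ℓ * ((-1:ℝ))^ℓ = 1 := by
    rw [← pow_add]
    exact Even.neg_one_pow ⟨ℓ, rfl⟩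
  have hdCQ0 : deriv C (Q 0) = -((-1:ℝ)^ℓ) * deriv C x₀ := by
    rw [hQ0, hCdpar, hsgn]
  have hφ0 : φ 0 = 0 := by
    show u (p 0) * C (q 0) + (-1)^ℓ * (u (P 0) * C (Q 0)) = 0
    rw [hCq0, hCQ0]; ring
  have hφd0 : φd 0 = 0 := by
    show (deriv u (p 0) * pd 0 * C (q 0) + u (p 0) * (deriv C (q 0) * qd 0))
      + (-1)^ℓ * (deriv u (P 0) * Pd 0 * C (Q 0) + u (P 0) * (deriv C (Q 0) * Qd 0)) = 0
    rw [hCq0, hCQ0, hdCQ0, hq0, hp0, hP0, hqd0, hQd0]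
    linear_combination (-(u r₀ * (deriv C x₀ * (r₀/x₀)))) * hsq
  -- derivative of φd at 0
  have hρd0 : HasDerivAt (fun w => w / ρ w) (1/r₀) 0 := by
    have h3 := (hasDerivAt_id (0:ℝ)).div (hρ 0) (hρpos 0).ne'
    have h4 : (1 * ρ 0 - id 0 * (0 / ρ 0)) / ρ 0 ^ 2 = 1/r₀ := by
      simp only [id_eq, hρ0]
      field_simp
      ring
    rwa [h4] at h3
  have hpdd : HasDerivAt pd (1/r₀) 0 := hρd0.sub_const 1
  have hPdd : HasDerivAt Pd (1/r₀) 0 := hρd0.add_const 1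
  have hmulw : HasDerivAt (fun w => (w / ρ w) * w) ((1/r₀) * 0 + (0 / ρ 0) * 1) 0 :=
    hρd0.mul (hasDerivAt_id 0)
  have h2w : HasDerivAt (fun w : ℝ => 2*w) 2 0 := by
    simpa using (hasDerivAt_id (0:ℝ)).const_mul (2:ℝ)
  have hqdd : HasDerivAt qd (-2/x₀) 0 := by
    have h3 := ((hmulw.add (hρ 0)).sub h2w).div_const x₀
    have h4 : ((1/r₀) * 0 + (0 / ρ 0) * 1 + 0 / ρ 0 - 2) / x₀ = -2/x₀ := by
      rw [hρ0]
      norm_num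
    rwa [h4] at h3
  have hQdd : HasDerivAt Qd (2/x₀) 0 := by
    have h3 := ((hmulw.add (hρ 0)).add h2w).div_const x₀
    have h4 : ((1/r₀) * 0 + (0 / ρ 0) * 1 + 0 / ρ 0 + 2) / x₀ = 2/x₀ := by
      rw [hρ0]
      norm_num
    rwa [h4] at h3
  have hdup : HasDerivAt (fun w => deriv u (p w)) (deriv (deriv u) (p 0) * pd 0) 0 :=
    ((hud (p 0) (hppos 0)).differentiableAt.hasDerivAt).comp 0 (hp 0)
  have hduP : HasDerivAt (fun w => deriv u (P w)) (deriv (deriv u) (P 0) * Pd 0) 0 :=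
    ((hud (P 0) (hPpos 0)).differentiableAt.hasDerivAt).comp 0 (hP 0)
  have hup : HasDerivAt (fun w => u (p w)) (deriv u (p 0) * pd 0) 0 :=
    ((hu (p 0) (hppos 0)).differentiableAt.hasDerivAt).comp 0 (hp 0)
  have huP : HasDerivAt (fun w => u (P w)) (deriv u (P 0) * Pd 0) 0 :=
    ((hu (P 0) (hPpos 0)).differentiableAt.hasDerivAt).comp 0 (hP 0)
  have hCq : HasDerivAt (fun w => C (q w)) (deriv C (q 0) * qd 0) 0 :=
    ((hC (q 0)).hasDerivAt).comp 0 (hq 0)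
  have hCQ : HasDerivAt (fun w => C (Q w)) (deriv C (Q 0) * Qd 0) 0 :=
    ((hC (Q 0)).hasDerivAt).comp 0 (hQ 0)
  have hdCq : HasDerivAt (fun w => deriv C (q w)) (deriv (deriv C) (q 0) * qd 0) 0 :=
    ((hCd (q 0)).hasDerivAt).comp 0 (hq 0)
  have hdCQ : HasDerivAt (fun w => deriv C (Q w)) (deriv (deriv C) (Q 0) * Qd 0) 0 :=
    ((hCd (Q 0)).hasDerivAt).comp 0 (hQ 0)
  have Hφd : HasDerivAt φd
      ((((deriv (deriv u) (p 0) * pd 0) * pd 0 + deriv u (p 0) * (1/r₀)) * C (q 0)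
          + (deriv u (p 0) * pd 0) * (deriv C (q 0) * qd 0)
        + ((deriv u (p 0) * pd 0) * (deriv C (q 0) * qd 0)
          + u (p 0) * ((deriv (deriv C) (q 0) * qd 0) * qd 0 + deriv C (q 0) * (-2/x₀))))
      + (-1)^ℓ * (((deriv (deriv u) (P 0) * Pd 0) * Pd 0 + deriv u (P 0) * (1/r₀)) * C (Q 0)
          + (deriv u (P 0) * Pd 0) * (deriv C (Q 0) * Qd 0)
        + ((deriv u (P 0) * Pd 0) * (deriv C (Q 0) * Qd 0)
          + u (P 0) * ((deriv (deriv C) (Q 0) * Qd 0) * Qd 0 + deriv C (Q 0) * (2/x₀))))) 0 := by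
    exact (((hdup.mul hpdd).mul hCq).add (hup.mul (hdCq.mul hqdd))).add
      ((((hduP.mul hPdd).mul hCQ).add (huP.mul (hdCQ.mul hQdd))).const_mul _)
  -- L'Hopital
  have hf0 : Tendsto φ (𝓝[>] (0:ℝ)) (𝓝 0) := by
    have h3 := (hφ 0).continuousAt.tendsto
    rw [hφ0] at h3
    exact h3.mono_left nhdsWithin_le_nhds
  have hg0 : Tendsto (fun w : ℝ => w^2) (𝓝[>] (0:ℝ)) (𝓝 0) := by
    have h3 := ((continuous_pow 2).tendsto (0:ℝ)).mono_left
      (nhdsWithin_le_nhds (s := Ioi (0:ℝ)))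
    simpa using h3
  set M := ((((deriv (deriv u) (p 0) * pd 0) * pd 0 + deriv u (p 0) * (1/r₀)) * C (q 0)
          + (deriv u (p 0) * pd 0) * (deriv C (q 0) * qd 0)
        + ((deriv u (p 0) * pd 0) * (deriv C (q 0) * qd 0)
          + u (p 0) * ((deriv (deriv C) (q 0) * qd 0) * qd 0 + deriv C (q 0) * (-2/x₀))))
      + (-1)^ℓ * (((deriv (deriv u) (P 0) * Pd 0) * Pd 0 + deriv u (P 0) * (1/r₀)) * C (Q 0)
          + (deriv u (P 0) * Pd 0) * (deriv C (Q 0) * Qd 0)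
        + ((deriv u (P 0) * Pd 0) * (deriv C (Q 0) * Qd 0)
          + u (P 0) * ((deriv (deriv C) (Q 0) * Qd 0) * Qd 0 + deriv C (Q 0) * (2/x₀))))) with hMdef
  have hdiv : Tendsto (fun w => φd w / (2*w)) (𝓝[>] (0:ℝ)) (𝓝 (M/2)) := by
    have h3 : Tendsto (slope φd 0) (𝓝[≠] (0:ℝ)) (𝓝 M) :=
      hasDerivAt_iff_tendsto_slope.mp Hφd
    have h4 : Tendsto (slope φd 0) (𝓝[>] (0:ℝ)) (𝓝 M) :=
      h3.mono_left (nhdsWithin_mono 0 (fun x hx => ne_of_gt hx))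
    have h5 := h4.div_const 2
    have h6 : (fun w => slope φd 0 w / 2) = fun w => φd w / (2*w) := by
      funext w
      rw [slope_def_field, hφd0]
      ring
    rwa [h6] at h5
  have hlh : Tendsto (fun w => φ w / w^2) (𝓝[>] (0:ℝ)) (𝓝 (M/2)) := by
    refine HasDerivAt.lhopital_zero_right_on_Ioo (zero_lt_one) (fun x _ => hφ x)
      (fun x _ => by simpa using hasDerivAt_pow 2 x) (fun x hx => ?_) hf0 hg0 hdiv
    have : (0:ℝ) < x := hx.1
    positivity
  have hβ : M / 2 = -2 * (r₀ * deriv u r₀ + u r₀) * deriv C x₀ / x₀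
      + u r₀ * deriv (deriv C) x₀ * s₀ / (1 - s₀) := by
    rw [hMdef, hCq0, hCQ0, hq0, hQ0, hp0, hP0, hpd0, hPd0, hqd0, hQd0, hCdpar, hCddpar, hsgn,
      ← hx₀sq, ← hr₀sq]
    linear_combination ((-2*deriv u r₀*deriv C x₀*r₀/x₀ + u r₀*deriv (deriv C) x₀*r₀^2/x₀^2
      - 2*u r₀*deriv C x₀/x₀)/2) * hsq
  rw [← hβ]
  exact hlh

end Phi


set_option maxHeartbeats 2000000 in
/-- at a diagonal zero `s₀` of the kernel (i.e. `C(√(1-s₀)) = 0`), the gradient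
`(β₁, β₂) = ∇F_ℓ(s₀,s₀)` (of the smooth extension `G` of `F_ℓ` to the triangle) satisfies
`β₁+β₂ = v'(s₀) = -(U_n(√s₀)/√(1-s₀)) C'(√(1-s₀))`,
`β₁ = (1/√(1-s₀)) C'(√(1-s₀)) ((n-3) U_n(√s₀) - 2√s₀ U_n'(√s₀))`, and consequently
`1 + β₁/(2(β₁+β₂)) = (n+1)/2 + √s₀ U'(√s₀)/U(√s₀)`. -/
theorem Fker_diagonal_gradient (n : ℕ) (hn : 2 ≤ n) (ℓ : ℕ) (U : ℝ → ℝ)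
    (hU : AnalyticOnNhd ℝ U (Ici 0)) (hUpos : ∀ r : ℝ, 0 < r → 0 < U r)
    (a b : ℝ) (ha : 0 < a) (hab : a ≤ b) (hb : b < 1)
    (s₀ : ℝ) (hs₀ : s₀ ∈ Ico a b)
    (hzero : normGegenbauer (((n : ℝ) - 2) / 2) ℓ (Real.sqrt (1 - s₀)) = 0)
    (G : ℝ × ℝ → ℝ) (hG : ContDiffOn ℝ (⊤ : ℕ∞) G (triangleDom a b))
    (hGF : ∀ t s : ℝ, a ≤ s → s ≤ t → t ≤ b → G (t, s) = Fker n ℓ U t s) :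
    fderivWithin ℝ G (triangleDom a b) (s₀, s₀) (1, 0) +
        fderivWithin ℝ G (triangleDom a b) (s₀, s₀) (0, 1) =
      deriv (fun s : ℝ => 2 * Uweight n U (Real.sqrt s) *
          normGegenbauer (((n : ℝ) - 2) / 2) ℓ (Real.sqrt (1 - s))) s₀ ∧
    fderivWithin ℝ G (triangleDom a b) (s₀, s₀) (1, 0) +
        fderivWithin ℝ G (triangleDom a b) (s₀, s₀) (0, 1) =
      -(Uweight n U (Real.sqrt s₀) / Real.sqrt (1 - s₀)) *
        deriv (normGegenbauer (((n : ℝ) - 2) / 2) ℓ) (Real.sqrt (1 - s₀)) ∧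
    fderivWithin ℝ G (triangleDom a b) (s₀, s₀) (1, 0) =
      (1 / Real.sqrt (1 - s₀)) *
        deriv (normGegenbauer (((n : ℝ) - 2) / 2) ℓ) (Real.sqrt (1 - s₀)) *
        (((n : ℝ) - 3) * Uweight n U (Real.sqrt s₀) -
          2 * Real.sqrt s₀ * deriv (Uweight n U) (Real.sqrt s₀)) ∧
    1 + fderivWithin ℝ G (triangleDom a b) (s₀, s₀) (1, 0) /
        (2 * (fderivWithin ℝ G (triangleDom a b) (s₀, s₀) (1, 0) +
          fderivWithin ℝ G (triangleDom a b) (s₀, s₀) (0, 1))) =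
      ((n : ℝ) + 1) / 2 +
        Real.sqrt s₀ * deriv U (Real.sqrt s₀) / U (Real.sqrt s₀) := by
  classical
  set μ : ℝ := ((n : ℝ) - 2) / 2 with hμdef
  have hμ : 0 ≤ μ := by
    have h2 : (2:ℝ) ≤ (n:ℝ) := by exact_mod_cast hn
    rw [hμdef]; linarith
  set C : ℝ → ℝ := normGegenbauer μ ℓ with hCdef
  set Un : ℝ → ℝ := Uweight n U with hUndef
  set x₀ : ℝ := Real.sqrt (1 - s₀) with hx₀def
  set r₀ : ℝ := Real.sqrt s₀ with hr₀def
  have has₀ : a ≤ s₀ := hs₀.1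
  have hs₀b : s₀ < b := hs₀.2
  have hs₀pos : 0 < s₀ := lt_of_lt_of_le ha has₀
  have hs₀1 : s₀ < 1 := lt_trans hs₀b hb
  have hr₀pos : 0 < r₀ := Real.sqrt_pos.mpr hs₀pos
  have hx₀pos : 0 < x₀ := Real.sqrt_pos.mpr (by linarith)
  have hr₀sq : r₀^2 = s₀ := Real.sq_sqrt hs₀pos.le
  have hx₀sq : x₀^2 = 1 - s₀ := Real.sq_sqrt (by linarith)
  have hab' : a < b := lt_of_le_of_lt has₀ hs₀b
  have hsq : ((-1:ℝ))^ℓ * ((-1:ℝ))^ℓ = 1 := by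
    rw [← pow_add]; exact Even.neg_one_pow ⟨ℓ, rfl⟩
  -- ℓ ≥ 1
  obtain ⟨m, rfl⟩ : ∃ m, ℓ = m + 1 := by
    cases ℓ with
    | zero => exact absurd hzero (by rw [hCdef, NG.c0x]; norm_num)
    | succ m => exact ⟨m, rfl⟩
  -- analyticity of Un
  have hUnA : ∀ r : ℝ, 0 < r → AnalyticAt ℝ Un r := by
    intro r hr
    rw [hUndef, show Uweight n U = fun r => U r * r^(n-2) from rfl]
    exact (hU r hr.le).mul ((analyticAt_id).pow _)
  have hUnOn : AnalyticOnNhd ℝ Un (Ioi 0) := fun r hr => hUnA r hr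
  have hUndA : ∀ r : ℝ, 0 < r → AnalyticAt ℝ (deriv Un) r := fun r hr => hUnOn.deriv r hr
  -- C facts
  have hCdiff : Differentiable ℝ C := NG.diff μ (m+1)
  have hCddiff : Differentiable ℝ (deriv C) := NG.diff_deriv μ (m+1)
  have hCpar : ∀ x, C (-x) = (-1)^(m+1) * C x := fun x => NG.parity μ (m+1) x
  have hCdpar : ∀ x, deriv C (-x) = (-1)^(m+1+1) * deriv C x := fun x => NG.deriv_parity μ (m+1) x
  have hCddpar : ∀ x, deriv (deriv C) (-x) = (-1)^(m+1) * deriv (deriv C) x :=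
    fun x => NG.deriv2_parity μ (m+1) x
  have hAne : deriv C x₀ ≠ 0 := fun hA => NG.simple_zero μ hμ m x₀ hzero hA
  have hode : (1 - x₀^2) * deriv (deriv C) x₀ = (2*μ+1) * x₀ * deriv C x₀ :=
    NG.ode_at_zero μ hμ m x₀ (by rw [hx₀sq]; simpa using hs₀pos.ne') hzero
  -- diagonal value of the kernel
  have hFdiag : ∀ s : ℝ, Fker n (m+1) U s s = 2 * Un (Real.sqrt s) * C (Real.sqrt (1-s)) := by
    intro s
    rw [show Fker n (m+1) U s s =
        Un (Real.sqrt s - Real.sqrt (s - s)) *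
          C ((Real.sqrt s * Real.sqrt (s - s) + (1 - s)) / Real.sqrt (1 - s)) +
        (-1) ^ (m+1) * Un (Real.sqrt s + Real.sqrt (s - s)) *
          C ((Real.sqrt s * Real.sqrt (s - s) - (1 - s)) / Real.sqrt (1 - s)) from rfl]
    rw [sub_self, Real.sqrt_zero, mul_zero, zero_add, zero_sub, sub_zero, add_zero,
      Real.div_sqrt, neg_div, Real.div_sqrt, hCpar]
    linear_combination (Un (Real.sqrt s) * C (Real.sqrt (1-s))) * hsq
  -- the explicit diagonal function v and its derivative
  set A : ℝ := deriv C x₀ with hAdef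
  set v : ℝ → ℝ := fun s => 2 * Un (Real.sqrt s) * C (Real.sqrt (1 - s)) with hvdef
  have hUn0 : HasDerivAt Un (deriv Un r₀) r₀ := (hUnA r₀ hr₀pos).differentiableAt.hasDerivAt
  have hvd : HasDerivAt v (2*(deriv Un r₀ * (1/(2*r₀))) * C x₀
      + (2 * Un r₀) * (A * (1/(2*x₀)*(-1)))) s₀ := by
    have h1 : HasDerivAt (fun s => Real.sqrt s) (1/(2*r₀)) s₀ := by
      simpa [hr₀def] using (Real.hasDerivAt_sqrt hs₀pos.ne')
    have hUnsqrt : HasDerivAt (fun s => Un (Real.sqrt s)) (deriv Un r₀ * (1/(2*r₀))) s₀ := by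
      have := ((hUnA r₀ hr₀pos).differentiableAt.hasDerivAt).comp s₀ h1
      simp [hr₀def] at this ⊢; exact this
    have h2 : HasDerivAt (fun s : ℝ => 1 - s) (-1) s₀ := by
      simpa using (hasDerivAt_id s₀).const_sub 1
    have h3 : HasDerivAt (fun s => Real.sqrt (1 - s)) (1/(2*x₀) * (-1)) s₀ := by
      have := (Real.hasDerivAt_sqrt (by linarith : (1:ℝ) - s₀ ≠ 0)).comp s₀ h2
      simp [hx₀def] at this ⊢; exact this
    have hCsqrt : HasDerivAt (fun s => C (Real.sqrt (1 - s))) (A * (1/(2*x₀)*(-1))) s₀ :=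
      ((hCdiff (Real.sqrt (1 - s₀))).hasDerivAt).comp s₀ h3
    exact (hUnsqrt.const_mul 2).mul hCsqrt
  -- the gradient functional
  set f := fderivWithin ℝ G (triangleDom a b) (s₀, s₀) with hfdef
  have hmemT : (s₀, s₀) ∈ triangleDom a b := ⟨has₀, le_rfl, hs₀b.le⟩
  have hGf : HasFDerivWithinAt G f (triangleDom a b) (s₀, s₀) :=
    ((hG.differentiableOn (by simp)) _ hmemT).hasFDerivWithinAt
  -- diagonal curve
  have hdiagG : HasDerivWithinAt (fun s : ℝ => G (s, s)) (f (1, 1)) (Icc a b) s₀ := by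
    have hγ : HasDerivAt (fun s : ℝ => ((s, s) : ℝ × ℝ)) (1, 1) s₀ :=
      HasDerivAt.prodMk (hasDerivAt_id s₀) (hasDerivAt_id s₀)
    have hmaps : MapsTo (fun s : ℝ => ((s, s) : ℝ × ℝ)) (Icc a b) (triangleDom a b) :=
      fun s hs => ⟨hs.1, le_rfl, hs.2⟩
    have h0 := HasFDerivWithinAt.comp_hasDerivWithinAt (f := fun s : ℝ => ((s, s) : ℝ × ℝ))
      s₀ hGf (hγ.hasDerivWithinAt (s := Icc a b)) hmaps
    exact h0
  have hdiagv : HasDerivWithinAt v (f (1, 1)) (Icc a b) s₀ := by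
    refine hdiagG.congr (fun s hs => ?_) ?_
    · rw [hvdef]
      simp only
      rw [← hFdiag s, hGF s s hs.1 le_rfl hs.2]
    · rw [hvdef]
      simp only
      rw [← hFdiag s₀, hGF s₀ s₀ has₀ le_rfl hs₀b.le]
  have hUDIcc : UniqueDiffWithinAt ℝ (Icc a b) s₀ :=
    (uniqueDiffOn_Icc hab') s₀ ⟨has₀, hs₀b.le⟩
  have hf11 : f (1, 1) = deriv v s₀ := by
    have e1 := hdiagv.derivWithin hUDIcc
    have e2 := (hvd.hasDerivWithinAt (s := Icc a b)).derivWithin hUDIcc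
    rw [← e1, e2, hvd.deriv]
  have hf11split : f (1, 1) = f (1, 0) + f (0, 1) := by
    rw [show ((1:ℝ), (1:ℝ)) = ((1:ℝ), (0:ℝ)) + ((0:ℝ), (1:ℝ)) by norm_num]
    exact map_add f _ _
  have hvdval : deriv v s₀ = -(Un r₀ / x₀) * A := by
    rw [hvd.deriv, hzero]
    field_simp
    ring
  -- conjunct 1 & 2
  have hconj1 : f (1, 0) + f (0, 1) = deriv v s₀ := by rw [← hf11split, hf11]
  have hconj2 : f (1, 0) + f (0, 1) = -(Un r₀ / x₀) * A := by rw [hconj1, hvdval]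
  -- horizontal curve and β₁
  have hcurve : HasDerivWithinAt (fun t : ℝ => G (t, s₀)) (f (1, 0)) (Icc s₀ b) s₀ := by
    have hγ : HasDerivAt (fun t : ℝ => ((t, s₀) : ℝ × ℝ)) (1, 0) s₀ :=
      HasDerivAt.prodMk (hasDerivAt_id s₀) (hasDerivAt_const s₀ s₀)
    have hmaps : MapsTo (fun t : ℝ => ((t, s₀) : ℝ × ℝ)) (Icc s₀ b) (triangleDom a b) :=
      fun t ht => ⟨has₀, ht.1, ht.2⟩
    have h0 := HasFDerivWithinAt.comp_hasDerivWithinAt (f := fun t : ℝ => ((t, s₀) : ℝ × ℝ))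
      s₀ hGf (hγ.hasDerivWithinAt (s := Icc s₀ b)) hmaps
    exact h0
  have hslope1 : Tendsto (slope (fun t : ℝ => G (t, s₀)) s₀) (𝓝[>] s₀) (𝓝 (f (1, 0))) := by
    have h1 := hasDerivWithinAt_iff_tendsto_slope.mp hcurve
    rw [← nhdsWithin_Ioc_eq_nhdsGT hs₀b]
    exact h1.mono_left (nhdsWithin_mono _ (fun x hx => ⟨⟨hx.1.le, hx.2⟩, by
      simp only [mem_singleton_iff]
      exact hx.1.ne'⟩))
  set β : ℝ := -2 * (r₀ * deriv Un r₀ + Un r₀) * A / x₀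
      + Un r₀ * deriv (deriv C) x₀ * s₀ / (1 - s₀) with hβdef
  have hphi := phi_limit s₀ Un C (m+1) hs₀pos hs₀1 hUnA hUndA hCdiff hCddiff
    hCpar hCdpar hCddpar hzero
  have hmap : Tendsto (fun t : ℝ => Real.sqrt (t - s₀)) (𝓝[>] s₀) (𝓝[>] (0:ℝ)) := by
    apply tendsto_nhdsWithin_of_tendsto_nhds_of_eventually_within
    · have hcont : Continuous (fun t : ℝ => Real.sqrt (t - s₀)) :=
        Real.continuous_sqrt.comp (continuous_id.sub continuous_const)
      have := hcont.tendsto s₀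
      simp only [sub_self, Real.sqrt_zero] at this
      exact this.mono_left nhdsWithin_le_nhds
    · filter_upwards [self_mem_nhdsWithin] with t ht
      exact Real.sqrt_pos.mpr (sub_pos.mpr ht)
  have hGs₀ : G (s₀, s₀) = 0 := by
    rw [hGF s₀ s₀ has₀ le_rfl hs₀b.le, hFdiag s₀,
      show Real.sqrt (1 - s₀) = x₀ from rfl, hzero, mul_zero]
  have hslope2 : Tendsto (slope (fun t : ℝ => G (t, s₀)) s₀) (𝓝[>] s₀) (𝓝 β) := by
    have hcomp := (hphi.comp hmap)
    refine hcomp.congr' ?_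
    filter_upwards [Ioc_mem_nhdsGT_of_mem ⟨le_refl s₀, hs₀b⟩] with t ht
    have hts : 0 ≤ t - s₀ := by linarith [ht.1]
    have hsqw : Real.sqrt (t - s₀) ^ 2 = t - s₀ := Real.sq_sqrt hts
    have hrts : Real.sqrt (s₀ + Real.sqrt (t - s₀) ^ 2) = Real.sqrt t := by
      rw [hsqw]; ring_nf
    have hGt : G (t, s₀) = Fker n (m+1) U t s₀ := hGF t s₀ has₀ ht.1.le ht.2
    show _ = slope (fun t : ℝ => G (t, s₀)) s₀ t
    rw [slope_def_field, hGs₀, sub_zero, hGt]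
    rw [show Fker n (m+1) U t s₀ =
        Un (Real.sqrt t - Real.sqrt (t - s₀)) *
          C ((Real.sqrt t * Real.sqrt (t - s₀) + (1 - t)) / Real.sqrt (1 - s₀)) +
        (-1) ^ (m+1) * Un (Real.sqrt t + Real.sqrt (t - s₀)) *
          C ((Real.sqrt t * Real.sqrt (t - s₀) - (1 - t)) / Real.sqrt (1 - s₀)) from rfl]
    simp only [Function.comp_apply]
    rw [hrts, hsqw]
    rw [show 1 - s₀ - (t - s₀) = 1 - t by ring]
    ring
  have hconj3pre : f (1, 0) = β := tendsto_nhds_unique hslope1 hslope2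
  -- use the ODE to eliminate the second derivative
  have hUnr₀pos : 0 < Un r₀ := by
    rw [hUndef, show Uweight n U r₀ = U r₀ * r₀^(n-2) from rfl]
    have := hUpos r₀ hr₀pos
    positivity
  have hconj3 : f (1, 0) = (1 / x₀) * A *
      (((n:ℝ) - 3) * Un r₀ - 2 * r₀ * deriv Un r₀) := by
    rw [hconj3pre, hβdef]
    have h2μ : 2*μ+1 = (n:ℝ) - 1 := by rw [hμdef]; ring
    rw [h2μ] at hode
    have hode' : s₀ * deriv (deriv C) x₀ = ((n:ℝ) - 1) * x₀ * A := by
      rw [show s₀ = 1 - x₀^2 by rw [hx₀sq]; ring]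
      exact hode
    rw [show (1:ℝ) - s₀ = x₀^2 from hx₀sq.symm]
    have hx₀ne : x₀ ≠ 0 := hx₀pos.ne'
    field_simp
    linear_combination (Un r₀) * hode'
  refine ⟨hconj1, hconj2, hconj3, ?_⟩
  -- final arithmetic
  have hduw : deriv Un r₀ = deriv U r₀ * r₀^(n-2) + U r₀ * (((n:ℕ) - 2 : ℕ) * r₀^(n-2-1)) := by
    have h1 : HasDerivAt (Uweight n U)
        (deriv U r₀ * r₀^(n-2) + U r₀ * (((n:ℕ) - 2 : ℕ) * r₀^(n-2-1))) r₀ := by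
      exact ((hU r₀ hr₀pos.le).differentiableAt.hasDerivAt).mul (hasDerivAt_pow (n-2) r₀)
    rw [hUndef]
    exact h1.deriv
  have hkey : (((n:ℕ) - 2 : ℕ) : ℝ) * r₀^(n-2-1) * r₀ = (((n:ℕ) - 2 : ℕ) : ℝ) * r₀^(n-2) := by
    rcases Nat.eq_zero_or_pos (n - 2) with h | h
    · rw [h]; norm_num
    · obtain ⟨j, hj⟩ : ∃ j, n - 2 = j + 1 := ⟨n - 2 - 1, by omega⟩
      rw [hj, Nat.add_sub_cancel, pow_succ]
      ring
  have hcast : (((n:ℕ) - 2 : ℕ) : ℝ) = (n:ℝ) - 2 := by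
    push_cast [Nat.cast_sub hn]
    ring
  have hU₀pos : 0 < U r₀ := hUpos r₀ hr₀pos
  have hU₀ne : U r₀ ≠ 0 := hU₀pos.ne'
  have hAx : A ≠ 0 := hAne
  have hx₀ne : x₀ ≠ 0 := hx₀pos.ne'
  have hr₀ne : r₀ ≠ 0 := hr₀pos.ne'
  rw [show (2 : ℝ) * (f (1, 0) + f (0, 1)) = 2 * (-(Un r₀ / x₀) * A) by rw [hconj2],
    hconj3, hduw, hcast, show Un r₀ = U r₀ * r₀^(n-2) from rfl]
  rcases eq_or_lt_of_le hn with hn2 | hn3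
  · -- n = 2
    subst hn2
    norm_num
    field_simp
    ring
  · -- n ≥ 3
    obtain ⟨j, hj⟩ : ∃ j, n - 2 = j + 1 := ⟨n - 3, by omega⟩
    rw [hj, Nat.add_sub_cancel, pow_succ]
    have hrj : r₀ ^ j ≠ 0 := pow_ne_zero _ hr₀ne
    field_simp
    ring
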